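/- arXiv:0801.3962 — 2 statements merged into one kernel-verified Lean document; each statement's English description precedes it below -/
import Mathlib

section
/- For every 1/2 < α ≤ 1 and every finite admissible sequence (k₁,…,k_n), the set function μ_α satisfies the consistency property μ_α(I_{k₁⋯k_n}) = Σ_{m} μ_α(I_{k₁⋯k_n m}), where the sum ranges over all m ∈ ℕ₀ for which (k₁,…,k_n,m) is admissible. -/
open Filter MeasureTheory Metric Set Topology

namespace SchmelingStratmann

/-- The (real) Riemann zeta function `ζ(s) = Σ_{n ≥ 1} n^(-s)`. -/
noncomputable def zeta (s : ℝ) : ℝ := ∑' n : ℕ, ((n : ℝ) + 1) ^ (-s)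

/-- The constant `c = (2ζ(2))⁻¹ = 3/π²`. -/
noncomputable def c : ℝ := (2 * zeta 2)⁻¹

/-- The partial sum `Σ_{i=1}^{j} i⁻²`. -/
noncomputable def S (j : ℕ) : ℝ := ∑ i ∈ Finset.range j, (((i : ℝ) + 1) ^ 2)⁻¹

/-- Given the (left endpoint, length) data `a` of a fundamental interval whose word has
last index `k` (the empty word having last index `0`), this is the (left endpoint, length)
data of its child indexed by `m`: the children with `m > k` are placed mutually adjacent
starting from the left endpoint in increasing order of `m`, while for `k ≠ 0` the children
with `m = k, k-1, …, 0` are placed mutually adjacent starting from the right endpoint; the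
child `m ≠ k` has length `c ⬝ len ⬝ |m - k|⁻²` and the child `m = k ≠ 0` has length
`c ⬝ len ⬝ (2k)⁻²`. -/
noncomputable def child (a : ℝ × ℝ) (k m : ℕ) : ℝ × ℝ :=
  if k < m then
    (a.1 + c * a.2 * S (m - k - 1), c * a.2 * (((m : ℝ) - (k : ℝ)) ^ 2)⁻¹)
  else if m < k then
    (a.1 + a.2 - c * a.2 * (((2 * (k : ℝ)) ^ 2)⁻¹ + S (k - m)),
      c * a.2 * (((k : ℝ) - (m : ℝ)) ^ 2)⁻¹)
  else
    (a.1 + a.2 - c * a.2 * ((2 * (k : ℝ)) ^ 2)⁻¹, c * a.2 * ((2 * (k : ℝ)) ^ 2)⁻¹)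

noncomputable def buildAux : ℕ → ℝ × ℝ → List ℕ → ℝ × ℝ
  | _, a, [] => a
  | k, a, m :: w => buildAux m (child a k m) w

/-- The (left endpoint, length) data of the fundamental interval of the word `w`,
starting from `I_∅ = [0,1)`. -/
noncomputable def intData (w : List ℕ) : ℝ × ℝ := buildAux 0 (0, 1) w

/-- The fundamental half-open interval `I_{k₁⋯k_n}` of the word `w = [k₁, …, k_n]`. -/
noncomputable def I (w : List ℕ) : Set ℝ :=
  Set.Ico (intData w).1 ((intData w).1 + (intData w).2)

/-- The diameter (length) `|I_{k₁⋯k_n}|` of a fundamental interval. -/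
noncomputable def len (w : List ℕ) : ℝ := (intData w).2

/-- A finite word `[k₁, …, k_n]` is admissible if `k₁ ≠ 0` and `kᵢ = 0` implies
`k_{i+1} ≠ 0` (with the convention `k₀ = 0`). -/
def Adm (w : List ℕ) : Prop := List.Chain (fun a b => a = 0 → b ≠ 0) 0 w

/-- Admissibility of an infinite sequence (0-based: `k 0` is `k₁`). -/
def AdmSeq (k : ℕ → ℕ) : Prop := k 0 ≠ 0 ∧ ∀ i, k i = 0 → k (i + 1) ≠ 0

/-- The length-`n` prefix `[k₁, …, k_n]` of an infinite sequence. -/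
def pref (k : ℕ → ℕ) (n : ℕ) : List ℕ := (List.range n).map k

/-- The Cantor-like set `C = ⋂_{n ≥ 1} ⋃_{I ∈ C_n} I`. -/
noncomputable def Cset : Set ℝ :=
  ⋂ n : ℕ, ⋃ w ∈ {w : List ℕ | Adm w ∧ w.length = n + 1}, I w

/-- The set `C_∞` of dissipative points: points `ρ(k₁,k₂,…) = ⋂_n cl(I_{k₁⋯k_n})` for
admissible sequences with `k_n → ∞`. -/
noncomputable def Cinf : Set ℝ :=
  {x | ∃ k : ℕ → ℕ, AdmSeq k ∧ Tendsto k atTop atTop ∧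
    ∀ n, x ∈ closure (I (pref k n))}

/-- The set `C_∞^γ` of dissipative points whose coding satisfies
`limsup_n |k_{n+1} - k_n| / n^γ ≤ 1`. -/
noncomputable def CinfGamma (γ : ℝ) : Set ℝ :=
  {x | ∃ k : ℕ → ℕ, AdmSeq k ∧ Tendsto k atTop atTop ∧
    limsup (fun n : ℕ => |((k (n + 1) : ℝ)) - (k n : ℝ)| / ((n + 1 : ℝ)) ^ γ) atTop ≤ 1 ∧
    ∀ n, x ∈ closure (I (pref k n))}

/-- The transition weights `p_α(k, m)` on `ℕ₀`. -/
noncomputable def p (α : ℝ) (k m : ℕ) : ℝ :=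
  if m = k then (if k = 0 then 0 else (2 * zeta (2 * α))⁻¹ * (2 * (k : ℝ)) ^ (-(2 * α)))
  else if m = 0 then (2 * zeta (2 * α))⁻¹ * (k : ℝ) ^ (-(2 * α))
  else (2 * zeta (2 * α))⁻¹ *
    (|(m : ℝ) - (k : ℝ)| ^ (-(2 * α)) + ((m : ℝ) + (k : ℝ)) ^ (-(2 * α)))

noncomputable def muAux (α : ℝ) : ℕ → List ℕ → ℝ
  | _, [] => 1
  | k, m :: w => p α k m * muAux α m w

/-- The set function `μ_α` on fundamental intervals:
`μ_α(I_{k₁⋯k_n}) = Π_{i=0}^{n-1} p_α(k_i, k_{i+1})` with `k₀ = 0`. -/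
noncomputable def mu (α : ℝ) (w : List ℕ) : ℝ := muAux α 0 w

/-- The increment distribution of the Cauchy-type random walk:
`P(increment = l) = (2ζ(β))⁻¹ |l|^(-β)` for `l ≠ 0`. -/
noncomputable def q (β : ℝ) (l : ℤ) : ℝ :=
  if l = 0 then 0 else (2 * zeta β)⁻¹ * |(l : ℝ)| ^ (-β)

/-!
`p_α(k, ·)` is the law of `|k + X|` for an increment `X` with law `q_{2α}` on `ℤ`: the walk
started at `k` is reflected at the origin, so the children weights of a word are a probability
vector. Words that are not admissible contain a step `0 → 0` and get weight `p_α(0,0) = 0`, so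
restricting the sum to admissible extensions changes nothing.
-/

theorem hasSum_zeta {β : ℝ} (hβ : 1 < β) :
    HasSum (fun n : ℕ => ((n : ℝ) + 1) ^ (-β)) (zeta β) := by
  have h : Summable (fun n : ℕ => (n : ℝ) ^ (-β)) := Real.summable_nat_rpow.mpr (by linarith)
  exact ((summable_nat_add_iff 1).mpr h).congr (fun n => by push_cast; rfl) |>.hasSum

theorem zeta_pos {β : ℝ} (hβ : 1 < β) : 0 < zeta β :=
  (hasSum_zeta hβ).summable.tsum_pos (fun n => by positivity) 0 (by positivity)

theorem q_of_ne_zero (β : ℝ) {l : ℤ} (hl : l ≠ 0) :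
    q β l = (2 * zeta β)⁻¹ * |(l : ℝ)| ^ (-β) :=
  if_neg hl

theorem hasSum_q {β : ℝ} (hβ : 1 < β) : HasSum (q β) 1 := by
  have hhalf : HasSum (fun n : ℕ => (2 * zeta β)⁻¹ * ((n : ℝ) + 1) ^ (-β))
      ((2 * zeta β)⁻¹ * zeta β) := (hasSum_zeta hβ).mul_left _
  have hpos : HasSum (fun n : ℕ => q β (n + 1)) ((2 * zeta β)⁻¹ * zeta β) :=
    hhalf.congr_fun fun n => by
      rw [q_of_ne_zero _ (by omega)]; push_cast; rw [abs_of_pos (by positivity)]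
  have hneg : HasSum (fun n : ℕ => q β (-(n + 1))) ((2 * zeta β)⁻¹ * zeta β) :=
    hhalf.congr_fun fun n => by
      rw [q_of_ne_zero _ (by omega)]; push_cast; rw [abs_neg, abs_of_pos (by positivity)]
  convert hpos.of_add_one_of_neg_add_one hneg using 1
  have := (zeta_pos hβ).ne'
  rw [q, if_pos rfl]
  field_simp
  ring

theorem p_eq_q_add_q (α : ℝ) (k m : ℕ) :
    p α k m = q (2 * α) (m - k) + if m = 0 then 0 else q (2 * α) (-m - k) := by
  rcases eq_or_ne m k with rfl | hmk
  · rcases eq_or_ne m 0 with rfl | hm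
    · simp [p, q]
    · rw [p, if_pos rfl, if_neg hm, if_neg hm, sub_self, q, if_pos rfl, zero_add,
        q_of_ne_zero _ (by omega)]
      push_cast
      rw [← neg_add', abs_neg, abs_of_nonneg (by positivity), ← two_mul]
  · rcases eq_or_ne m 0 with rfl | hm
    · rw [p, if_neg hmk, if_pos rfl, if_pos rfl, add_zero, q_of_ne_zero _ (by omega)]
      simp
    · rw [p, if_neg hmk, if_neg hm, if_neg hm, q_of_ne_zero _ (by omega),
        q_of_ne_zero _ (by omega), mul_add]
      push_cast
      rw [← neg_add', abs_neg, abs_of_nonneg (a := (m : ℝ) + k) (by positivity)]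

theorem hasSum_p {α : ℝ} (hα : 1 / 2 < α) (k : ℕ) : HasSum (p α k) 1 := by
  have hshift : HasSum (fun n : ℤ => q (2 * α) (n - k)) 1 := by
    have := (Equiv.subRight (k : ℤ)).hasSum_iff.mpr (hasSum_q (β := 2 * α) (by linarith))
    simpa only [Function.comp_def, Equiv.subRight_apply] using this
  obtain ⟨a, ha⟩ : Summable fun n : ℕ => q (2 * α) (n - k) :=
    hshift.summable.comp_injective Nat.cast_injective
  obtain ⟨b, hb⟩ : Summable fun n : ℕ => q (2 * α) (-(n + 1) - k) :=
    hshift.summable.comp_injective (i := fun n : ℕ => -((n : ℤ) + 1))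
      fun i j h => by simpa using h
  have hab : a + b = 1 :=
    (HasSum.of_nat_of_neg_add_one (f := fun n : ℤ => q (2 * α) (n - k)) ha hb).unique hshift
  have hr : HasSum (fun m : ℕ => if m = 0 then 0 else q (2 * α) (-m - k)) b := by
    refine zero_add b ▸ HasSum.zero_add (hb.congr_fun fun n => ?_)
    simp only [Nat.add_one_ne_zero, if_false, Nat.cast_add_one, neg_add]
  rw [funext (p_eq_q_add_q α k), ← hab]
  exact ha.add hr

theorem muAux_append_singleton (α : ℝ) (j : ℕ) (w : List ℕ) (m : ℕ) :
    muAux α j (w ++ [m]) = muAux α j w * p α (w.getLastD j) m := by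
  induction w generalizing j with
  | nil => simp [muAux]
  | cons a w ih => simp only [List.cons_append, muAux, ih, List.getLastD_cons, mul_assoc]

theorem muAux_eq_zero_of_not_isChain (α : ℝ) {j : ℕ} {w : List ℕ}
    (hw : ¬ (j :: w).IsChain (fun a b => a = 0 → b ≠ 0)) : muAux α j w = 0 := by
  induction w generalizing j with
  | nil => simp at hw
  | cons m w ih =>
    rw [List.isChain_cons_cons, not_and_or] at hw
    rcases hw with hjm | hw
    · obtain ⟨rfl, rfl⟩ : j = 0 ∧ m = 0 := by tauto
      simp [muAux, p]
    · simp [muAux, ih hw]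

theorem mu_eq_zero_of_not_adm (α : ℝ) {w : List ℕ} (hw : ¬ Adm w) : mu α w = 0 :=
  muAux_eq_zero_of_not_isChain α hw

theorem hasSum_mu_append_singleton {α : ℝ} (hα : 1 / 2 < α) (w : List ℕ) :
    HasSum (fun m => mu α (w ++ [m])) (mu α w) := by
  simpa [mu, muAux_append_singleton] using (hasSum_p hα (w.getLastD 0)).mul_left (mu α w)

theorem mu_consistency_general (α : ℝ) (hα₁ : 1 / 2 < α)
    (w : List ℕ) :
    mu α w = ∑' m : {m : ℕ // Adm (w ++ [m])}, mu α (w ++ [(m : ℕ)]) := by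
  have hsupp : Function.support (fun m => mu α (w ++ [m])) ⊆ {m | Adm (w ++ [m])} :=
    fun m hm => by_contra fun h => hm (mu_eq_zero_of_not_adm α h)
  rw [← (hasSum_mu_append_singleton hα₁ w).tsum_eq]
  exact (tsum_subtype_eq_of_support_subset hsupp).symm

/-- the consistency property of the set function `μ_α`: for every
`1/2 < α ≤ 1` and every finite admissible word `w`,
`μ_α(I_w) = Σ_m μ_α(I_{wm})`, the sum ranging over the `m` with `w ++ [m]` admissible. -/
theorem mu_consistency (α : ℝ) (hα₁ : 1 / 2 < α) (hα₂ : α ≤ 1)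
    (w : List ℕ) (hw : Adm w) :
    mu α w = ∑' m : {m : ℕ // Adm (w ++ [m])}, mu α (w ++ [(m : ℕ)]) :=
  mu_consistency_general α hα₁ w

end SchmelingStratmann
end

section
/- For every ε > 0 there exists α₀ ∈ (1/2, 1) such that for every α ∈ (α₀, 1), every γ > 1/(2α−1), and every point x = ρ(k₁,k₂,…) ∈ C_∞^γ, one has liminf_{n→∞} log μ_α(I_{k₁⋯k_n}) / log |I_{k₁⋯k_n}| ≥ α − ε. -/
/-! Along the coding sequence, `|I_n|` and `μ_α(I_n)` are products of one-step factors. With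
`a` the jump `|k_{i+1} - k_i|` (or `2k_i`), minus the logarithms of these factors are the costs
`log 2ζ(2) + 2 log a` and `log 2ζ(2α) + 2α log a - log (1 + t)`, where `t ≤ a / (k_{i+1} + k_i)`
measures the reflected term of `p_α`. Once `k_i` is large, `log (1 + t)` is at most `ε` times
the length cost: either `t ≤ ε`, or the jump is at least `ε k_i` and `log a ≥ 1/ε`. Since
`ζ(2α) ≥ ζ(2)`, each `μ`-cost then exceeds `α - ε` times the length cost by the fixed amount
`(1 - α) log 2ζ(2)`, which eventually absorbs the finitely many early steps. -/

open Filter MeasureTheory Metric Set Topology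

namespace SchmelingStratmann

open Real Finset

lemma eventually_sum_range_nonneg {f : ℕ → ℝ} {δ : ℝ} (hδ : 0 < δ)
    (hf : ∀ᶠ i in atTop, δ ≤ f i) : ∀ᶠ n in atTop, 0 ≤ ∑ i ∈ range n, f i := by
  obtain ⟨N, hN⟩ := eventually_atTop.1 hf
  set B := ∑ i ∈ range N, f i
  have hgrowth : Tendsto (fun n : ℕ => B + ((n : ℝ) - N) * δ) atTop atTop :=
    tendsto_atTop_add_const_left _ _ <|
      (tendsto_atTop_add_const_right _ _ tendsto_natCast_atTop_atTop).atTop_mul_const hδ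
  filter_upwards [hgrowth.eventually_ge_atTop 0, eventually_ge_atTop N] with n hn hNn
  have htail : ((n : ℝ) - N) * δ ≤ ∑ i ∈ Ico N n, f i := by
    simpa [Nat.cast_sub hNn] using card_nsmul_le_sum (Ico N n) f δ fun i hi => hN i (mem_Ico.1 hi).1
  rw [← sum_range_add_sum_Ico f hNn]
  linarith

lemma le_liminf_sum_div_sum {u v : ℕ → ℝ} {r δ C : ℝ} (hδ : 0 < δ) (hv : ∀ i, 0 < v i)
    (hlow : ∀ᶠ i in atTop, r * v i + δ ≤ u i) (hup : ∀ i, u i ≤ C * v i) :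
    r ≤ liminf (fun n => (∑ i ∈ range n, u i) / ∑ i ∈ range n, v i) atTop := by
  have hV : ∀ n, 0 < n → 0 < ∑ i ∈ range n, v i := fun n hn =>
    sum_pos (fun i _ => hv i) (nonempty_range_iff.2 hn.ne')
  have hbdd : ∀ᶠ n in atTop, (∑ i ∈ range n, u i) / ∑ i ∈ range n, v i ≤ C := by
    filter_upwards [eventually_gt_atTop 0] with n hn
    rw [div_le_iff₀ (hV n hn), mul_sum]
    exact sum_le_sum fun i _ => hup i
  refine le_liminf_of_le (isCoboundedUnder_ge_of_eventually_le atTop hbdd) ?_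
  have hslack : ∀ᶠ i in atTop, δ ≤ u i - r * v i := hlow.mono fun i hi => by linarith
  filter_upwards [eventually_sum_range_nonneg hδ hslack, eventually_gt_atTop 0] with n hn hn0
  rw [le_div_iff₀ (hV n hn0), mul_sum]
  rw [sum_sub_distrib] at hn
  linarith

lemma summable_zeta {s : ℝ} (hs : 1 < s) : Summable fun n : ℕ => ((n : ℝ) + 1) ^ (-s) :=
  ((summable_nat_add_iff 1).2 ((summable_nat_rpow (p := -s)).2 (by linarith))).congr fun n => by
    push_cast; rfl

lemma zeta_pos_s12 {s : ℝ} (hs : 1 < s) : 0 < zeta s :=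
  (summable_zeta hs).tsum_pos (fun n => by positivity) 0 (by positivity)

lemma zeta_le_zeta {s t : ℝ} (hs : 1 < s) (hst : s ≤ t) : zeta t ≤ zeta s :=
  (summable_zeta (hs.trans_le hst)).tsum_le_tsum
    (fun n => rpow_le_rpow_of_exponent_le (by linarith [n.cast_nonneg (α := ℝ)]) (by linarith))
    (summable_zeta hs)

lemma zeta_two : zeta 2 = π ^ 2 / 6 := by
  have h := (hasSum_nat_add_iff' 1).2 hasSum_zeta_two
  simp only [range_one, sum_singleton, Nat.cast_zero, ne_eq, OfNat.ofNat_ne_zero,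
    not_false_eq_true, zero_pow, div_zero, sub_zero] at h
  refine h.tsum_eq.symm.trans (tsum_congr fun n => ?_) |>.symm
  rw [rpow_neg (by positivity), one_div, ← rpow_natCast]
  push_cast; rfl

lemma one_le_log_two_mul_zeta_two : 1 ≤ log (2 * zeta 2) := by
  rw [zeta_two, le_log_iff_exp_le (by positivity)]
  nlinarith [exp_one_lt_d9, pi_gt_three]

lemma log_two_mul_zeta_two_le {α : ℝ} (hα : 1 / 2 < α) (hα1 : α ≤ 1) :
    log (2 * zeta 2) ≤ log (2 * zeta (2 * α)) := by
  have hpos : 0 < zeta 2 := by rw [zeta_two]; positivity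
  gcongr
  exact zeta_le_zeta (by linarith) (by linarith)

lemma c_pos : 0 < c := by rw [c, zeta_two]; positivity

noncomputable def jump (K m : ℕ) : ℝ := if m = K then 2 * K else |(m : ℝ) - K|

/-- With `jump` this splits the weight as `p α K m = (2ζ(2α))⁻¹ jump^(-2α) (1 + reflection)`:
the ratio of the reflected term `(m + K)^(-2α)` to the direct one (no reflected term for
`m = K` or `m = 0`). -/
noncomputable def reflection (α : ℝ) (K m : ℕ) : ℝ :=
  if m = K ∨ m = 0 then 0 else (jump K m / (m + K)) ^ (2 * α)

section Jump

variable {α : ℝ} {K m : ℕ}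

lemma one_le_jump (h : m ≠ 0 ∨ K ≠ 0) : 1 ≤ jump K m := by
  unfold jump
  split_ifs with hmK
  · subst hmK
    have : (1 : ℝ) ≤ m := by exact_mod_cast Nat.one_le_iff_ne_zero.2 (by tauto)
    linarith
  · have hne : ((m : ℤ) - K) ≠ 0 := sub_ne_zero.2 (by exact_mod_cast hmK)
    exact_mod_cast Int.one_le_abs hne

lemma jump_pos (h : m ≠ 0 ∨ K ≠ 0) : 0 < jump K m := one_pos.trans_le (one_le_jump h)

lemma jump_nonneg (K m : ℕ) : 0 ≤ jump K m := by
  unfold jump; split_ifs <;> positivity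

lemma jump_le_add (K m : ℕ) : jump K m ≤ m + K := by
  unfold jump
  split_ifs with hmK
  · subst hmK; linarith
  · rw [abs_sub_le_iff]; constructor <;> linarith [m.cast_nonneg (α := ℝ), K.cast_nonneg (α := ℝ)]

lemma reflection_nonneg (α : ℝ) (K m : ℕ) : 0 ≤ reflection α K m := by
  unfold reflection; split_ifs
  · rfl
  · exact rpow_nonneg (div_nonneg (jump_nonneg K m) (by positivity)) _

lemma reflection_le_jump_div (hα : 1 / 2 ≤ α) (K m : ℕ) :
    reflection α K m ≤ jump K m / (m + K) := by
  have hx : 0 ≤ jump K m / (m + K) := div_nonneg (jump_nonneg K m) (by positivity)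
  unfold reflection; split_ifs
  · exact hx
  · exact rpow_le_self_of_le_one hx (div_le_one_of_le₀ (jump_le_add K m) (by positivity))
      (by linarith)

lemma reflection_le_one (hα : 1 / 2 ≤ α) (K m : ℕ) : reflection α K m ≤ 1 :=
  (reflection_le_jump_div hα K m).trans (div_le_one_of_le₀ (jump_le_add K m) (by positivity))

lemma p_eq (h : m ≠ 0 ∨ K ≠ 0) :
    p α K m = (2 * zeta (2 * α))⁻¹ * jump K m ^ (-(2 * α)) * (1 + reflection α K m) := by
  unfold p reflection
  by_cases hmK : m = K
  · have hK : K ≠ 0 := by rintro rfl; exact h.elim (· hmK) (· rfl)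
    simp [hmK, hK, jump]
  by_cases hm : m = 0
  · subst hm
    simp [hmK, jump]
  have hj := jump_pos h
  have hs : (0 : ℝ) < m + K := by positivity
  rw [if_neg hmK, if_neg hm, if_neg (by tauto)]
  have habs : |(m : ℝ) - K| = jump K m := (if_neg hmK).symm
  rw [habs, div_rpow hj.le hs.le, rpow_neg hj.le, rpow_neg hs.le]
  field_simp

noncomputable def lenCost (K m : ℕ) : ℝ := log (2 * zeta 2) + 2 * log (jump K m)

noncomputable def muCost (α : ℝ) (K m : ℕ) : ℝ :=
  log (2 * zeta (2 * α)) + 2 * α * log (jump K m) - log (1 + reflection α K m)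

lemma log_c_mul_jump (h : m ≠ 0 ∨ K ≠ 0) : log (c * (jump K m ^ 2)⁻¹) = -lenCost K m := by
  have hj := jump_pos h
  rw [log_mul c_pos.ne' (by positivity), c, log_inv, log_inv, log_pow, lenCost]
  push_cast; ring

lemma log_p (hα : 1 / 2 < α) (h : m ≠ 0 ∨ K ≠ 0) : log (p α K m) = -muCost α K m := by
  have hj := jump_pos h
  have hZ : 0 < 2 * zeta (2 * α) := by linarith [zeta_pos_s12 (s := 2 * α) (by linarith)]
  have ht := reflection_nonneg α K m
  rw [p_eq h, log_mul (by positivity) (by linarith), log_mul (by positivity) (by positivity),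
    log_inv, log_rpow hj, muCost]
  ring

lemma p_pos (hα : 1 / 2 < α) (h : m ≠ 0 ∨ K ≠ 0) : 0 < p α K m := by
  have hZ := zeta_pos_s12 (s := 2 * α) (by linarith)
  have hj := jump_pos h
  have ht := reflection_nonneg α K m
  rw [p_eq h]
  positivity

lemma lenCost_pos (h : m ≠ 0 ∨ K ≠ 0) : 0 < lenCost K m := by
  have := log_nonneg (one_le_jump h)
  rw [lenCost]
  linarith [one_le_log_two_mul_zeta_two]

lemma muCost_le (hα : 1 / 2 < α) (hα1 : α ≤ 1) (h : m ≠ 0 ∨ K ≠ 0) :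
    muCost α K m ≤ log (2 * zeta (2 * α)) / log (2 * zeta 2) * lenCost K m := by
  have hZ1 := one_le_log_two_mul_zeta_two
  have hC : 1 ≤ log (2 * zeta (2 * α)) / log (2 * zeta 2) :=
    (one_le_div₀ (by linarith)).2 (log_two_mul_zeta_two_le hα hα1)
  have hj := log_nonneg (one_le_jump h)
  have ht := log_nonneg (by linarith [reflection_nonneg α K m] : 1 ≤ 1 + reflection α K m)
  rw [lenCost, mul_add, div_mul_cancel₀ _ (by linarith), muCost]
  nlinarith

/-- The reflected term is negligible unless the jump is of the order of `K`, in which case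
it is absorbed by `log (jump K m)`. -/
lemma log_one_add_reflection_le {ε : ℝ} (hα : 1 / 2 ≤ α) (hε : 0 < ε) (h : m ≠ 0 ∨ K ≠ 0)
    (hK : exp (1 / ε) / ε ≤ K) : log (1 + reflection α K m) ≤ ε * lenCost K m := by
  set t := reflection α K m
  have ht0 : 0 ≤ t := reflection_nonneg α K m
  have hlog : log (1 + t) ≤ t := by linarith [log_le_sub_one_of_pos (by linarith : 0 < 1 + t)]
  have hZ1 := one_le_log_two_mul_zeta_two
  have hj := log_nonneg (one_le_jump h)
  rcases le_or_gt t ε with hsmall | hlarge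
  · rw [lenCost]; nlinarith
  have hs : (0 : ℝ) < m + K := by exact_mod_cast (by omega : 0 < m + K)
  have hjump : ε * K ≤ jump K m :=
    calc ε * K ≤ t * (m + K) := by nlinarith [m.cast_nonneg (α := ℝ)]
      _ ≤ jump K m := (le_div_iff₀ hs).1 (reflection_le_jump_div hα K m)
  have hexp : exp (1 / ε) ≤ jump K m := by
    calc exp (1 / ε) = ε * (exp (1 / ε) / ε) := by field_simp
      _ ≤ jump K m := (mul_le_mul_of_nonneg_left hK hε.le).trans hjump
  have hinv : 1 / ε ≤ log (jump K m) := (le_log_iff_exp_le (jump_pos h)).2 hexp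
  have htwo : 2 ≤ 2 * ε * log (jump K m) := by
    have := mul_le_mul_of_nonneg_left hinv hε.le
    rw [mul_one_div_cancel hε.ne'] at this
    linarith
  rw [lenCost]
  nlinarith [reflection_le_one hα K m]

lemma add_mul_lenCost_le_muCost {ε : ℝ} (hα : 1 / 2 < α) (hα1 : α ≤ 1) (hε : 0 < ε)
    (h : m ≠ 0 ∨ K ≠ 0) (hK : exp (1 / ε) / ε ≤ K) :
    (α - ε) * lenCost K m + (1 - α) * log (2 * zeta 2) ≤ muCost α K m := by
  have hrefl := log_one_add_reflection_le hα.le hε h hK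
  have hZ := log_two_mul_zeta_two_le hα hα1
  rw [muCost]
  rw [lenCost] at hrefl ⊢
  nlinarith

end Jump

lemma child_snd (a : ℝ × ℝ) (K m : ℕ) : (child a K m).2 = c * a.2 * (jump K m ^ 2)⁻¹ := by
  unfold child jump
  rcases lt_trichotomy K m with hlt | rfl | hgt
  · simp [hlt, hlt.ne', sq_abs]
  · simp
  · rw [if_neg (not_lt.2 hgt.le), if_pos hgt, if_neg hgt.ne, sq_abs]
    ring

lemma buildAux_append (K : ℕ) (a : ℝ × ℝ) (w : List ℕ) (m : ℕ) :
    buildAux K a (w ++ [m]) = child (buildAux K a w) (w.getLastD K) m := by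
  induction w generalizing K a with
  | nil => rfl
  | cons x xs ih => simp only [List.cons_append, buildAux, ih, List.getLastD_cons]

lemma muAux_append (α : ℝ) (K : ℕ) (w : List ℕ) (m : ℕ) :
    muAux α K (w ++ [m]) = muAux α K w * p α (w.getLastD K) m := by
  induction w generalizing K with
  | nil => simp [muAux]
  | cons x xs ih => simp only [List.cons_append, muAux, ih, List.getLastD_cons, mul_assoc]

def prev (k : ℕ → ℕ) : ℕ → ℕ
  | 0 => 0
  | n + 1 => k n

lemma AdmSeq.ne_zero_or_prev_ne_zero {k : ℕ → ℕ} (hk : AdmSeq k) :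
    ∀ n, k n ≠ 0 ∨ prev k n ≠ 0
  | 0 => Or.inl hk.1
  | n + 1 => by
    by_cases h : k n = 0
    · exact Or.inl (hk.2 n h)
    · exact Or.inr h

lemma tendsto_prev {k : ℕ → ℕ} (hk : Tendsto k atTop atTop) : Tendsto (prev k) atTop atTop :=
  (tendsto_add_atTop_iff_nat 1).1 hk

lemma pref_succ (k : ℕ → ℕ) (n : ℕ) : pref k (n + 1) = pref k n ++ [k n] := by
  simp [pref, List.range_succ]

lemma getLastD_pref (k : ℕ → ℕ) : ∀ n, (pref k n).getLastD 0 = prev k n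
  | 0 => rfl
  | n + 1 => by simp [pref_succ, prev]

lemma len_pref (k : ℕ → ℕ) (n : ℕ) :
    len (pref k n) = ∏ i ∈ range n, c * (jump (prev k i) (k i) ^ 2)⁻¹ := by
  induction n with
  | zero => rfl
  | succ n ih =>
    rw [prod_range_succ, ← ih, len, intData, pref_succ, buildAux_append, child_snd,
      getLastD_pref]
    rw [len, intData]; ring

lemma mu_pref (α : ℝ) (k : ℕ → ℕ) (n : ℕ) :
    mu α (pref k n) = ∏ i ∈ range n, p α (prev k i) (k i) := by
  induction n with
  | zero => rfl
  | succ n ih => rw [prod_range_succ, ← ih, mu, mu, pref_succ, muAux_append, getLastD_pref]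

lemma log_len_pref {k : ℕ → ℕ} (hk : ∀ n, k n ≠ 0 ∨ prev k n ≠ 0) (n : ℕ) :
    log (len (pref k n)) = -∑ i ∈ range n, lenCost (prev k i) (k i) := by
  have hne : ∀ i ∈ range n, c * (jump (prev k i) (k i) ^ 2)⁻¹ ≠ 0 := fun i _ =>
    mul_ne_zero c_pos.ne' (by have := jump_pos (hk i); positivity)
  rw [len_pref, log_prod hne, ← sum_neg_distrib]
  exact sum_congr rfl fun i _ => log_c_mul_jump (hk i)

lemma log_mu_pref {α : ℝ} {k : ℕ → ℕ} (hα : 1 / 2 < α) (hk : ∀ n, k n ≠ 0 ∨ prev k n ≠ 0) (n : ℕ) :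
    log (mu α (pref k n)) = -∑ i ∈ range n, muCost α (prev k i) (k i) := by
  rw [mu_pref, log_prod fun i _ => (p_pos hα (hk i)).ne', ← sum_neg_distrib]
  exact sum_congr rfl fun i _ => log_p hα (hk i)

/-- for every `ε > 0` there is `α₀ ∈ (1/2, 1)` such that for every
`α ∈ (α₀, 1)`, every `γ > 1/(2α-1)` and every point `x = ρ(k₁,k₂,…) ∈ C_∞^γ`,
`liminf_n log μ_α(I_{k₁⋯k_n}) / log |I_{k₁⋯k_n}| ≥ α - ε`. -/
theorem liminf_log_ratio (ε : ℝ) (hε : 0 < ε) :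
    ∃ α₀ : ℝ, α₀ ∈ Set.Ioo (1 / 2 : ℝ) 1 ∧
      ∀ α : ℝ, α ∈ Set.Ioo α₀ 1 → ∀ γ : ℝ, 1 / (2 * α - 1) < γ →
      ∀ k : ℕ → ℕ, AdmSeq k → Tendsto k atTop atTop →
        limsup (fun n : ℕ =>
            |((k (n + 1) : ℝ)) - (k n : ℝ)| / ((n + 1 : ℝ)) ^ γ) atTop ≤ 1 →
        α - ε ≤ liminf (fun n : ℕ =>
          Real.log (mu α (pref k n)) / Real.log (len (pref k n))) atTop := by
  refine ⟨3 / 4, ⟨by norm_num, by norm_num⟩, ?_⟩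
  rintro α ⟨hα₀, hα₁⟩ γ - k hadm hk -
  have hα : 1 / 2 < α := by linarith
  have hstep := hadm.ne_zero_or_prev_ne_zero
  have hratio : (fun n => log (mu α (pref k n)) / log (len (pref k n))) = fun n =>
      (∑ i ∈ range n, muCost α (prev k i) (k i)) / ∑ i ∈ range n, lenCost (prev k i) (k i) := by
    ext n
    rw [log_mu_pref hα hstep, log_len_pref hstep, neg_div_neg_eq]
  rw [hratio]
  refine le_liminf_sum_div_sum (δ := (1 - α) * log (2 * zeta 2)) ?_
    (fun i => lenCost_pos (hstep i)) ?_ (fun i => muCost_le hα hα₁.le (hstep i))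
  · nlinarith [one_le_log_two_mul_zeta_two]
  · filter_upwards [(tendsto_prev hk).eventually_ge_atTop ⌈exp (1 / ε) / ε⌉₊] with i hi
    exact add_mul_lenCost_le_muCost hα hα₁.le hε (hstep i) (Nat.ceil_le.1 hi)

end SchmelingStratmann
end
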